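/- Let H be a Hopf algebra over a commutative ring R, J a Drinfeld twist for H, and A a left H-module algebra with twisted algebra A^J. Then for all a,b ∈ A one has ab = Σ (J¹·a) ·_J (J²·b); consequently every H^J-stable ideal of A^J is an H-stable ideal of A, nilpotent ideals of A^J are nilpotent ideals of A, and A^J is H^J-semiprime if and only if A is H-semiprime. -/

import Mathlib

open TensorProduct

noncomputable section

/-! ### Integrals in a Hopf algebra -/

/-- `t` is a left integral in `H`: `h * t = ε(h) • t` for all `h ∈ H`. -/
def IsLeftIntegral (R : Type*) {H : Type*} [CommRing R] [Ring H] [HopfAlgebra R H]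
    (t : H) : Prop :=
  ∀ h : H, h * t = Coalgebra.counit (R := R) h • t

/-- `t` is a right integral in `H`: `t * h = ε(h) • t` for all `h ∈ H`. -/
def IsRightIntegral (R : Type*) {H : Type*} [CommRing R] [Ring H] [HopfAlgebra R H]
    (t : H) : Prop :=
  ∀ h : H, t * h = Coalgebra.counit (R := R) h • t

/-! ### Module algebras -/

variable (R H A : Type*)

/-- Given an `H`-action `ρ` on `A` (an `R`-algebra map `H → End_R A`),
`pairAction ρ w` is the operator on `A ⊗ A` given, for `w = Σ x ⊗ y`, by
`a ⊗ b ↦ Σ (x • a) ⊗ (y • b)`. -/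
def pairAction [CommRing R] [Ring H] [HopfAlgebra R H] [Ring A] [Algebra R A]
    (ρ : H →ₐ[R] Module.End R A) :
    H ⊗[R] H →ₗ[R] A ⊗[R] A →ₗ[R] A ⊗[R] A :=
  (TensorProduct.homTensorHomMap (RingHom.id R) A A A A) ∘ₗ
    (TensorProduct.map ρ.toLinearMap ρ.toLinearMap)

/-- A left `H`-module algebra structure on an `R`-algebra `A`: an `H`-module structure
(an `R`-algebra map `ρ : H → End_R A`) such that multiplication and unit of `A` are
morphisms of `H`-modules, i.e. `h • (a b) = Σ_(h) (h₁ • a)(h₂ • b)` and `h • 1 = ε(h) 1`;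
in other words, `A` is an `R`-algebra in the category of left `H`-modules. -/
structure ModuleAlgebra [CommRing R] [Ring H] [HopfAlgebra R H] [Ring A] [Algebra R A] where
  ρ : H →ₐ[R] Module.End R A
  act_mul : ∀ (h : H) (a b : A),
    ρ h (a * b) = LinearMap.mul' R A (pairAction R H A ρ (Coalgebra.comul h) (a ⊗ₜ[R] b))
  act_one : ∀ h : H, ρ h 1 = algebraMap R A (Coalgebra.counit h)

variable {R H A}

/-- The set of `H`-invariant elements `A^H = {a | h • a = ε(h) a}` of a module algebra. -/
def ModuleAlgebra.invariants [CommRing R] [Ring H] [HopfAlgebra R H] [Ring A] [Algebra R A]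
    (ma : ModuleAlgebra R H A) : Set A :=
  {a : A | ∀ h : H, ma.ρ h a = Coalgebra.counit (R := R) h • a}

/-- The set of central `H`-invariant elements `Z(A)^H` of a module algebra. -/
def ModuleAlgebra.centralInvariants [CommRing R] [Ring H] [HopfAlgebra R H] [Ring A]
    [Algebra R A] (ma : ModuleAlgebra R H A) : Set A :=
  {a : A | (∀ b : A, a * b = b * a) ∧ ∀ h : H, ma.ρ h a = Coalgebra.counit (R := R) h • a}

/-- A subset `I ⊆ A` is `H`-stable if it is closed under the `H`-action. -/
def IsHStable [CommRing R] [Ring H] [HopfAlgebra R H] [Ring A] [Algebra R A]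
    (ma : ModuleAlgebra R H A) (I : Set A) : Prop :=
  ∀ h : H, ∀ x ∈ I, ma.ρ h x ∈ I

variable (R H A)

/-- `B` realises the smash product `A # H` of a left `H`-module algebra `A` with `H`:
`B` contains `A` and `H` as subalgebras, the multiplication map `A ⊗_R H → B`,
`a ⊗ h ↦ a·h` is an `R`-module isomorphism (so `B = A ⊗_R H` as `R`-module), and
`(1 # h)(a # 1) = Σ_(h) (h₁ • a) # h₂` holds, which forces the smash product
multiplication `(a # h)(b # g) = Σ_(h) a (h₁ • b) # h₂ g`. -/
structure SmashProductStructure [CommRing R] [Ring H] [HopfAlgebra R H] [Ring A] [Algebra R A]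
    (ma : ModuleAlgebra R H A) (B : Type*) [Ring B] [Algebra R B] where
  ιA : A →ₐ[R] B
  ιH : H →ₐ[R] B
  mul_bij : Function.Bijective
    ((LinearMap.mul' R B) ∘ₗ (TensorProduct.map ιA.toLinearMap ιH.toLinearMap))
  commute_rel : ∀ (h : H) (a : A),
    ιH h * ιA a =
      LinearMap.mul' R B
        ((TensorProduct.map (ιA.toLinearMap ∘ₗ ((LinearMap.flip ma.ρ.toLinearMap) a))
          ιH.toLinearMap) (Coalgebra.comul h))

variable {R H A}

/-! ### Ideals and semiprimeness -/

/-- The ordered product `a₁ ⋯ aₙ` of a nonempty family of ring elements,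
relative to a multiplication `μ`. -/
def nProd {A : Type*} (μ : A → A → A) : A → List A → A
  | a, [] => a
  | a, b :: l => μ a (nProd μ b l)

/-- `I` is a two-sided ideal of `A` (described as a set). -/
def IsIdealSet (A : Type*) [Ring A] (I : Set A) : Prop :=
  (0 : A) ∈ I ∧ (∀ x ∈ I, ∀ y ∈ I, x + y ∈ I) ∧
    ∀ a : A, ∀ x ∈ I, a * x ∈ I ∧ x * a ∈ I

/-- `I` is a two-sided ideal with respect to a (possibly twisted) multiplication `μ`. -/
def IsIdealSetMul {A : Type*} [Ring A] (μ : A → A → A) (I : Set A) : Prop :=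
  (0 : A) ∈ I ∧ (∀ x ∈ I, ∀ y ∈ I, x + y ∈ I) ∧
    ∀ a : A, ∀ x ∈ I, μ a x ∈ I ∧ μ x a ∈ I

/-- `I` is a nilpotent ideal with respect to the multiplication `μ`: some power `Iⁿ`
vanishes, i.e. all products of `n + 1` elements of `I` are zero. -/
def IsNilpotentMulSet {A : Type*} [Zero A] (μ : A → A → A) (I : Set A) : Prop :=
  ∃ n : ℕ, ∀ f : Fin (n + 1) → A, (∀ i, f i ∈ I) →
    nProd μ (f 0) (List.ofFn fun i : Fin n => f i.succ) = 0

/-- A ring is semiprime if it has no nonzero nilpotent two-sided ideal. -/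
def RingIsSemiprime (A : Type*) [Ring A] : Prop :=
  ∀ I : Set A, IsIdealSet A I → IsNilpotentMulSet (· * ·) I → I ⊆ {0}

/-- A module algebra is `H`-semiprime if it has no nonzero nilpotent `H`-stable
two-sided ideal. -/
def IsHSemiprime [CommRing R] [Ring H] [HopfAlgebra R H] [Ring A] [Algebra R A]
    (ma : ModuleAlgebra R H A) : Prop :=
  ∀ I : Set A, IsIdealSet A I → IsHStable ma I → IsNilpotentMulSet (· * ·) I → I ⊆ {0}

/-! ### Drinfeld twists, triangularity, cosemisimplicity, strong semisimplicity -/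

variable (R H : Type*)

/-- `J ∈ H ⊗ H` is a Drinfeld twist for `H`: it is invertible and satisfies
`(J ⊗ 1)(Δ ⊗ 1)(J) = (1 ⊗ J)(1 ⊗ Δ)(J)` and `(ε ⊗ 1)(J) = 1 = (1 ⊗ ε)(J)`. -/
def IsDrinfeldTwist [CommRing R] [Ring H] [HopfAlgebra R H] (J : H ⊗[R] H) : Prop :=
  IsUnit J ∧
  ((Algebra.TensorProduct.includeLeft (R := R) (S := R) (A := H ⊗[R] H) (B := H)) J) *
      (LinearMap.rTensor H (Coalgebra.comul (R := R)) J) =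
    ((Algebra.TensorProduct.assoc R R R H H H).symm
        ((Algebra.TensorProduct.includeRight (R := R) (A := H) (B := H ⊗[R] H)) J)) *
      ((Algebra.TensorProduct.assoc R R R H H H).symm
        (LinearMap.lTensor H (Coalgebra.comul (R := R)) J)) ∧
  TensorProduct.lid R H (LinearMap.rTensor H (Coalgebra.counit (R := R)) J) = 1 ∧
  TensorProduct.rid R H (LinearMap.lTensor H (Coalgebra.counit (R := R)) J) = 1

/-- `r ∈ H ⊗ H` is a triangular structure on `H`: an invertible element with
`(Δ ⊗ 1)(r) = r₁₃ r₂₃`, `(1 ⊗ Δ)(r) = r₁₃ r₁₂`, `Δ^cop = r Δ r⁻¹` and `r⁻¹ = τ(r)`. -/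
def IsTriangularStructure [CommRing R] [Ring H] [HopfAlgebra R H] (r : H ⊗[R] H) : Prop :=
  IsUnit r ∧
  LinearMap.rTensor H (Coalgebra.comul (R := R)) r =
    ((TensorProduct.map (Algebra.TensorProduct.includeLeft
        (R := R) (S := R) (A := H) (B := H)).toLinearMap LinearMap.id) r) *
      ((TensorProduct.map (Algebra.TensorProduct.includeRight
        (R := R) (A := H) (B := H)).toLinearMap LinearMap.id) r) ∧
  (TensorProduct.assoc R H H H).symm (LinearMap.lTensor H (Coalgebra.comul (R := R)) r) =
    ((TensorProduct.map (Algebra.TensorProduct.includeLeft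
        (R := R) (S := R) (A := H) (B := H)).toLinearMap LinearMap.id) r) *
      ((Algebra.TensorProduct.includeLeft (R := R) (S := R) (A := H ⊗[R] H) (B := H)) r) ∧
  (∀ h : H, (TensorProduct.comm R H H) (Coalgebra.comul (R := R) h) * r =
      r * Coalgebra.comul (R := R) h) ∧
  (TensorProduct.comm R H H r) * r = 1 ∧ r * (TensorProduct.comm R H H r) = 1

/-- A Hopf algebra over a field is cosemisimple (its dual coalgebra structure is
cosemisimple) iff it admits a normalized (left or right) integral `λ : H → k` on `H`. -/
def IsCosemisimpleHopf (k H : Type*) [Field k] [Ring H] [HopfAlgebra k H] : Prop :=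
  ∃ lam : H →ₗ[k] k, lam 1 = 1 ∧
    ((∀ h : H, TensorProduct.lid k H (LinearMap.rTensor H lam (Coalgebra.comul (R := k) h)) =
        lam h • (1 : H)) ∨
     (∀ h : H, TensorProduct.rid k H (LinearMap.lTensor H lam (Coalgebra.comul (R := k) h)) =
        lam h • (1 : H)))

universe ua ub

/-- A Hopf algebra `H` is strongly semisimple if for every `H`-semiprime left
`H`-module algebra `A` the smash product `A # H` is semiprime. -/
def StronglySemisimple [CommRing R] [Ring H] [HopfAlgebra R H] : Prop :=
  ∀ (A : Type ua) [Ring A] [Algebra R A] (ma : ModuleAlgebra R H A), IsHSemiprime ma →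
    ∀ (B : Type ub) [Ring B] [Algebra R B],
      SmashProductStructure R H A ma B → RingIsSemiprime B

variable {R H}

variable (R H A : Type*)

/-- The twisted multiplication `a ·_J b := Σ (Q¹ • a)(Q² • b)` on a left `H`-module
algebra `A`, where `Q = J⁻¹` is the inverse of a Drinfeld twist `J`; `A` with this
multiplication is the twisted module algebra `A^J` (a left `H^J`-module algebra with
the same underlying `H`-action). -/
def twistedMul [CommRing R] [Ring H] [HopfAlgebra R H] [Ring A] [Algebra R A]
    (ρ : H →ₐ[R] Module.End R A) (Qinv : H ⊗[R] H) (a b : A) : A :=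
  LinearMap.mul' R A (pairAction R H A ρ Qinv (a ⊗ₜ[R] b))

variable {R H A}

/-! Write `a ·_w b := Σ (w¹ • a)(w² • b)` for `w ∈ H ⊗ H`, so that `·_1` is the product of
`A` and `·_{J⁻¹}` that of `A^J`. As `H ⊗ H` acts on `A ⊗ A` through an algebra map,
`a ·_{wc} b = Σ (c¹ • a) ·_w (c² • b)`; for `(w, c) = (J⁻¹, J)` this reads
`ab = Σ (J¹ • a) ·_J (J² • b)`. Hence an `H`-stable `·_w`-ideal is a `·_{wc}`-ideal, and the
`·_{wc}`-powers of an `H`-stable `I` lie in its `·_w`-powers, provided these are `H`-stable.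
They are when `w` has a right inverse `w'`, because then
`h • (a ·_w b) = a ·_{Δ(h) w} b = a ·_{w (w' Δ(h) w)} b`. Using `(w, c) = (J⁻¹, J)` and
`(1, J⁻¹)` transports ideals and nilpotency in both directions. -/

section RightPow

variable {R M : Type*} [CommSemiring R] [AddCommMonoid M] [Module R M]

/-- The right-nested power `I (I (⋯ I))` with `k + 1` factors, as a submodule. -/
def rightPow (μ : M →ₗ[R] M →ₗ[R] M) (I : Set M) : ℕ → Submodule R M
  | 0 => Submodule.span R I
  | k + 1 => Submodule.map₂ μ (Submodule.span R I) (rightPow μ I k)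

theorem rightPow_eq_span (μ : M →ₗ[R] M →ₗ[R] M) (I : Set M) (k : ℕ) :
    rightPow μ I k = Submodule.span R {z | ∃ f : Fin (k + 1) → M, (∀ i, f i ∈ I) ∧
      nProd (μ · ·) (f 0) (List.ofFn fun i : Fin k => f i.succ) = z} := by
  induction k with
  | zero =>
    refine congrArg (Submodule.span R) (Set.ext fun z => ?_)
    exact ⟨fun hz => ⟨fun _ => z, fun _ => hz, rfl⟩, by rintro ⟨f, hf, rfl⟩; exact hf 0⟩
  | succ k ih =>
    rw [rightPow, ih, Submodule.map₂_span_span]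
    congr 1
    ext z
    constructor
    · rintro ⟨a, ha, _, ⟨f, hf, rfl⟩, rfl⟩
      exact ⟨Fin.cons a f, Fin.cases ha hf, by simp [List.ofFn_succ, nProd]⟩
    · rintro ⟨f, hf, rfl⟩
      exact ⟨f 0, hf 0, _, ⟨fun i => f i.succ, fun i => hf i.succ, rfl⟩,
        by simp [List.ofFn_succ, nProd]⟩

theorem isNilpotentMulSet_iff_exists_rightPow_eq_bot (μ : M →ₗ[R] M →ₗ[R] M) (I : Set M) :
    IsNilpotentMulSet (μ · ·) I ↔ ∃ n, rightPow μ I n = ⊥ := by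
  simp only [IsNilpotentMulSet, rightPow_eq_span, Submodule.span_eq_bot]
  exact exists_congr fun n =>
    ⟨fun h _ ⟨f, hf, hz⟩ => hz ▸ h f hf, fun h f hf => h _ ⟨f, hf, rfl⟩⟩

end RightPow

section TwistedMul

variable [CommRing R] [Ring H] [HopfAlgebra R H] [Ring A] [Algebra R A]

theorem pairAction_eq_endTensorEndAlgHom_comp (ρ : H →ₐ[R] Module.End R A) :
    pairAction R H A ρ =
      (Module.endTensorEndAlgHom.comp (Algebra.TensorProduct.map ρ ρ)).toLinearMap := by
  ext
  rfl

theorem pairAction_mul (ρ : H →ₐ[R] Module.End R A) (x y : H ⊗[R] H) :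
    pairAction R H A ρ (x * y) = pairAction R H A ρ x * pairAction R H A ρ y := by
  simp only [pairAction_eq_endTensorEndAlgHom_comp, AlgHom.toLinearMap_apply, map_mul]

theorem pairAction_one (ρ : H →ₐ[R] Module.End R A) : pairAction R H A ρ 1 = 1 := by
  simp only [pairAction_eq_endTensorEndAlgHom_comp, AlgHom.toLinearMap_apply, map_one]

theorem twistedMul_one (ρ : H →ₐ[R] Module.End R A) : twistedMul R H A ρ 1 = (· * ·) := by
  ext a b
  simp [twistedMul, pairAction_one]

theorem twistedMul_mul_mem (ρ : H →ₐ[R] Module.End R A) {w : H ⊗[R] H} {a b : A}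
    {S : AddSubmonoid A} (h : ∀ u v : H, twistedMul R H A ρ w (ρ u a) (ρ v b) ∈ S)
    (c : H ⊗[R] H) : twistedMul R H A ρ (w * c) a b ∈ S := by
  rw [twistedMul, pairAction_mul, Module.End.mul_apply]
  induction c using TensorProduct.induction_on with
  | zero => simp
  | tmul u v => exact h u v
  | add c₁ c₂ h₁ h₂ => simpa using S.add_mem h₁ h₂

theorem ModuleAlgebra.act_twistedMul (ma : ModuleAlgebra R H A) (h : H) (w : H ⊗[R] H) (a b : A) :
    ma.ρ h (twistedMul R H A ma.ρ w a b) = twistedMul R H A ma.ρ (Coalgebra.comul h * w) a b := by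
  rw [twistedMul, twistedMul, pairAction_mul, Module.End.mul_apply]
  generalize pairAction R H A ma.ρ w (a ⊗ₜ[R] b) = t
  induction t using TensorProduct.induction_on with
  | zero => simp
  | tmul x y => exact ma.act_mul h x y
  | add t₁ t₂ h₁ h₂ => simp [h₁, h₂]

def twistedMulBilin (ρ : H →ₐ[R] Module.End R A) (w : H ⊗[R] H) : A →ₗ[R] A →ₗ[R] A :=
  (TensorProduct.mk R A A).compr₂ (LinearMap.mul' R A ∘ₗ pairAction R H A ρ w)

theorem twistedMulBilin_apply (ρ : H →ₐ[R] Module.End R A) (w : H ⊗[R] H) (a b : A) :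
    twistedMulBilin ρ w a b = twistedMul R H A ρ w a b :=
  rfl

theorem IsHStable.span {ma : ModuleAlgebra R H A} {s : Set A} (hs : IsHStable ma s) :
    IsHStable ma (Submodule.span R s) := fun h _ hx =>
  (Submodule.span_le (p := (Submodule.span R s).comap (ma.ρ h))).mpr
    (fun y hy => Submodule.subset_span (hs h y hy)) hx

variable {ma : ModuleAlgebra R H A} {w : H ⊗[R] H} {p q : Submodule R A}

theorem twistedMul_mul_mem_map₂ (hp : IsHStable ma p) (hq : IsHStable ma q) (c : H ⊗[R] H)
    {a b : A} (ha : a ∈ p) (hb : b ∈ q) :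
    twistedMul R H A ma.ρ (w * c) a b ∈ Submodule.map₂ (twistedMulBilin ma.ρ w) p q :=
  twistedMul_mul_mem ma.ρ (S := (Submodule.map₂ (twistedMulBilin ma.ρ w) p q).toAddSubmonoid)
    (fun u v => Submodule.apply_mem_map₂ _ (hp u a ha) (hq v b hb)) c

theorem IsHStable.map₂_twistedMulBilin {w' : H ⊗[R] H} (hww' : w * w' = 1)
    (hp : IsHStable ma p) (hq : IsHStable ma q) :
    IsHStable ma (Submodule.map₂ (twistedMulBilin ma.ρ w) p q) := by
  intro h
  have hcomul : Coalgebra.comul h * w = w * (w' * Coalgebra.comul h * w) := by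
    rw [← mul_assoc, ← mul_assoc, hww', one_mul]
  have hle : Submodule.map₂ (twistedMulBilin ma.ρ w) p q ≤
      (Submodule.map₂ (twistedMulBilin ma.ρ w) p q).comap (ma.ρ h) :=
    Submodule.map₂_le.mpr fun a ha b hb => by
      rw [Submodule.mem_comap, twistedMulBilin_apply, ma.act_twistedMul, hcomul]
      exact twistedMul_mul_mem_map₂ hp hq _ ha hb
  exact fun x hx => hle hx

variable {I : Set A}

theorem isHStable_rightPow {w' : H ⊗[R] H} (hww' : w * w' = 1) (hI : IsHStable ma I) :
    ∀ k, IsHStable ma (rightPow (twistedMulBilin ma.ρ w) I k)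
  | 0 => hI.span
  | k + 1 => hI.span.map₂_twistedMulBilin hww' (isHStable_rightPow hww' hI k)

theorem rightPow_twistedMulBilin_mul_le {w' : H ⊗[R] H} (hww' : w * w' = 1)
    (hI : IsHStable ma I) (c : H ⊗[R] H) :
    ∀ k, rightPow (twistedMulBilin ma.ρ (w * c)) I k ≤ rightPow (twistedMulBilin ma.ρ w) I k
  | 0 => le_rfl
  | k + 1 => Submodule.map₂_le.mpr fun _ ha _ hb =>
      twistedMul_mul_mem_map₂ hI.span (isHStable_rightPow hww' hI k) c ha
        (rightPow_twistedMulBilin_mul_le hww' hI c k hb)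

theorem IsNilpotentMulSet.twistedMul_mul {w' : H ⊗[R] H} (hww' : w * w' = 1)
    (hI : IsHStable ma I) (c : H ⊗[R] H) (hnil : IsNilpotentMulSet (twistedMul R H A ma.ρ w) I) :
    IsNilpotentMulSet (twistedMul R H A ma.ρ (w * c)) I := by
  obtain ⟨n, hn⟩ :=
    (isNilpotentMulSet_iff_exists_rightPow_eq_bot (twistedMulBilin ma.ρ w) I).mp hnil
  exact (isNilpotentMulSet_iff_exists_rightPow_eq_bot (twistedMulBilin ma.ρ (w * c)) I).mpr
    ⟨n, eq_bot_iff.mpr (hn ▸ rightPow_twistedMulBilin_mul_le hww' hI c n)⟩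

theorem IsIdealSetMul.twistedMul_mul (hI : IsIdealSetMul (twistedMul R H A ma.ρ w) I)
    (hst : IsHStable ma I) (c : H ⊗[R] H) : IsIdealSetMul (twistedMul R H A ma.ρ (w * c)) I := by
  obtain ⟨h0, hadd, habs⟩ := hI
  let S : AddSubmonoid A := ⟨⟨I, fun hx hy => hadd _ hx _ hy⟩, h0⟩
  refine ⟨h0, hadd, fun a x hx => ⟨?_, ?_⟩⟩
  · exact twistedMul_mul_mem ma.ρ (S := S) (fun u v => (habs _ _ (hst v x hx)).1) c
  · exact twistedMul_mul_mem ma.ρ (S := S) (fun u v => (habs _ _ (hst u x hx)).2) c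

end TwistedMul

theorem twisted_module_algebra_semiprime
    {R H A : Type*} [CommRing R] [Ring H] [HopfAlgebra R H] [Ring A] [Algebra R A]
    (ma : ModuleAlgebra R H A)
    (J Qinv : H ⊗[R] H)
    (hQJ : Qinv * J = 1) :
    -- `a b = Σ_J (J¹ • a) ·_J (J² • b)`
    (∀ a b : A, a * b =
      LinearMap.mul' R A (pairAction R H A ma.ρ Qinv
        (pairAction R H A ma.ρ J (a ⊗ₜ[R] b)))) ∧
    -- every `H^J`-stable ideal of `A^J` is an (`H`-stable) ideal of `A`
    (∀ I : Set A, IsIdealSetMul (twistedMul R H A ma.ρ Qinv) I → IsHStable ma I →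
      IsIdealSet A I) ∧
    -- nilpotent (`H^J`-stable) ideals of `A^J` are nilpotent ideals of `A`
    (∀ I : Set A, IsIdealSetMul (twistedMul R H A ma.ρ Qinv) I → IsHStable ma I →
      IsNilpotentMulSet (twistedMul R H A ma.ρ Qinv) I →
      IsNilpotentMulSet (· * ·) I) ∧
    -- `A^J` is `H^J`-semiprime iff `A` is `H`-semiprime
    ((∀ I : Set A, IsIdealSetMul (twistedMul R H A ma.ρ Qinv) I → IsHStable ma I →
        IsNilpotentMulSet (twistedMul R H A ma.ρ Qinv) I → I ⊆ {0}) ↔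
      IsHSemiprime ma) := by
  have hmul : twistedMul R H A ma.ρ (Qinv * J) = (· * ·) := by rw [hQJ, twistedMul_one]
  have ideal_of_twisted : ∀ I : Set A, IsIdealSetMul (twistedMul R H A ma.ρ Qinv) I →
      IsHStable ma I → IsIdealSet A I := fun I hI hst =>
    show IsIdealSetMul (· * ·) I from hmul ▸ hI.twistedMul_mul hst J
  have nilpotent_of_twisted : ∀ I : Set A, IsIdealSetMul (twistedMul R H A ma.ρ Qinv) I →
      IsHStable ma I → IsNilpotentMulSet (twistedMul R H A ma.ρ Qinv) I →
      IsNilpotentMulSet (· * ·) I := fun I _ hst hn =>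
    hmul ▸ hn.twistedMul_mul hQJ hst J
  refine ⟨fun a b => ?_, ideal_of_twisted, nilpotent_of_twisted,
    fun hsp I hI hst hn => ?_,
    fun hsp I hI hst hn => hsp I (ideal_of_twisted I hI hst) hst (nilpotent_of_twisted I hI hst hn)⟩
  · rw [← Module.End.mul_apply, ← pairAction_mul, hQJ, pairAction_one, Module.End.one_apply,
      LinearMap.mul'_apply]
  · change IsIdealSetMul (· * ·) I at hI
    rw [← twistedMul_one ma.ρ] at hI hn
    refine hsp I ?_ hst ?_
    · simpa only [one_mul] using hI.twistedMul_mul hst Qinv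
    · simpa only [one_mul] using hn.twistedMul_mul (mul_one 1) hst Qinv

end
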